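/- Let w be a weight on ℝⁿ and suppose that for every axis-parallel rectangle R and measurable A ⊆ R one has (|A|/|R|)^{p_0} ≤ K · w(A)/w(R) for some K ≥ 1 and p_0 ≥ 1. Let M_S^w denote the strong maximal operator with respect to w, M_S^w f(x) := sup_{R ∋ x} (1/w(R)) ∫_R |f| w. Then for every measurable set E and every α with 1 - 1/K < α < 1, the set {x : M_S^w(1_E)(x) > α} is contained in {x : M_S(1_E)(x) > 1 - K^{1/p_0}(1-α)^{1/p_0}}, where M_S is the (Lebesgue) strong maximal operator. -/

import Mathlib

open MeasureTheory Set
open scoped ENNReal NNReal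

/-- The open axis-parallel rectangle (rectangular parallelepiped) determined by `a` and `b`. -/
def rect {n : ℕ} (a b : Fin n → ℝ) : Set (Fin n → ℝ) :=
  Set.univ.pi fun i => Set.Ioo (a i) (b i)

/-- The strong maximal operator on `ℝⁿ` over axis-parallel rectangles. -/
noncomputable def MS {n : ℕ} (f : (Fin n → ℝ) → ℝ) (x : Fin n → ℝ) : ℝ :=
  sSup {r : ℝ | ∃ a b : Fin n → ℝ, (∀ i, x i ∈ Set.Ioo (a i) (b i)) ∧
    r = (volume (rect a b)).toReal⁻¹ * ∫ y in rect a b, |f y|}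

/-- The `w`-measure of a set: `w(S) = ∫_S w`. -/
noncomputable def wInt {n : ℕ} (w : (Fin n → ℝ) → ℝ) (S : Set (Fin n → ℝ)) : ℝ≥0∞ :=
  ∫⁻ x in S, ENNReal.ofReal (w x)

/-- The weighted sharp Tauberian constant of the strong maximal operator. -/
noncomputable def CSw {n : ℕ} (w : (Fin n → ℝ) → ℝ) (α : ℝ) : ℝ≥0∞ :=
  ⨆ (E : Set (Fin n → ℝ)) (_ : MeasurableSet E) (_ : 0 < wInt w E) (_ : wInt w E < ⊤),
    wInt w {x | α < MS (E.indicator 1) x} / wInt w E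

/-- The strong maximal operator with respect to the weight `w`. -/
noncomputable def MSw {n : ℕ} (w f : (Fin n → ℝ) → ℝ) (x : Fin n → ℝ) : ℝ :=
  sSup {r : ℝ | ∃ a b : Fin n → ℝ, (∀ i, x i ∈ Set.Ioo (a i) (b i)) ∧
    r = (∫ y in rect a b, w y)⁻¹ * ∫ y in rect a b, |f y| * w y}

/-!
Pick a rectangle `R ∋ x` in which `E` has `w`-density greater than `α`. Then `R \ E` carries
less than a `1 - α` share of `w(R)`, and the absorption inequality for `A = R \ E` turns this
into `|R \ E| / |R| < (K (1 - α)) ^ (1 / p₀)`, so the Lebesgue density of `E` in `R`, which is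
at most `M_S 1_E (x)`, exceeds `1 - K ^ (1 / p₀) (1 - α) ^ (1 / p₀)`.
-/

section WeightedRatios

variable {X : Type*} [MeasurableSpace X] {μ : Measure X}

theorem setIntegral_abs_indicator_one (E s : Set X) (hE : MeasurableSet E) :
    ∫ y in s, |E.indicator (1 : X → ℝ) y| ∂μ = (μ (s ∩ E)).toReal := by
  have h : ∀ y, |E.indicator (1 : X → ℝ) y| = E.indicator 1 y := fun y =>
    abs_of_nonneg (indicator_nonneg (fun _ _ => zero_le_one) y)
  simp_rw [h]
  rw [integral_indicator_one hE, Measure.real, Measure.restrict_apply hE, inter_comm]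

theorem setIntegral_abs_indicator_one_mul (w : X → ℝ) (E s : Set X) (hE : MeasurableSet E) :
    ∫ y in s, |E.indicator (1 : X → ℝ) y| * w y ∂μ = ∫ y in s ∩ E, w y ∂μ := by
  have h : ∀ y, |E.indicator (1 : X → ℝ) y| * w y = E.indicator w y := fun y => by
    by_cases hy : y ∈ E <;> simp [hy]
  simp_rw [h]
  exact setIntegral_indicator hE

theorem one_sub_rpow_lt_measure_inter_div {w : X → ℝ} {R E : Set X} {K p α : ℝ}
    (hE : MeasurableSet E) (hR0 : μ R ≠ 0) (hRtop : μ R ≠ ⊤) (hwR : IntegrableOn w R μ)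
    (hW : ∫ x in R, w x ∂μ ≠ 0) (hK : 0 < K) (hp : 0 < p) (hα : α < 1)
    (habs : ((μ (R \ E)).toReal / (μ R).toReal) ^ p ≤
      K * ((∫ x in R \ E, w x ∂μ) / ∫ x in R, w x ∂μ))
    (hαE : α < (∫ x in R ∩ E, w x ∂μ) / ∫ x in R, w x ∂μ) :
    1 - K ^ (1 / p) * (1 - α) ^ (1 / p) < (μ (R ∩ E)).toReal / (μ R).toReal := by
  have hw_split : (∫ x in R ∩ E, w x ∂μ) / (∫ x in R, w x ∂μ) +
      (∫ x in R \ E, w x ∂μ) / (∫ x in R, w x ∂μ) = 1 := by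
    rw [← add_div, integral_inter_add_sdiff hE hwR, div_self hW]
  have hμ_split :
      (μ (R ∩ E)).toReal / (μ R).toReal + (μ (R \ E)).toReal / (μ R).toReal = 1 := by
    rw [← add_div, ← ENNReal.toReal_add (measure_ne_top_of_subset inter_subset_left hRtop)
      (measure_ne_top_of_subset sdiff_subset hRtop), measure_inter_add_sdiff R hE,
      div_self (ENNReal.toReal_ne_zero.2 ⟨hR0, hRtop⟩)]
  have hroot : (μ (R \ E)).toReal / (μ R).toReal < K ^ (1 / p) * (1 - α) ^ (1 / p) := by
    rw [← Real.mul_rpow hK.le (sub_nonneg.2 hα.le), one_div,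
      Real.lt_rpow_inv_iff_of_pos (by positivity) (mul_nonneg hK.le (sub_nonneg.2 hα.le)) hp]
    calc ((μ (R \ E)).toReal / (μ R).toReal) ^ p
        ≤ K * ((∫ x in R \ E, w x ∂μ) / ∫ x in R, w x ∂μ) := habs
      _ < K * (1 - α) := by gcongr; linarith
  linarith

end WeightedRatios

section Rectangles

variable {n : ℕ}

theorem measurableSet_rect (a b : Fin n → ℝ) : MeasurableSet (rect a b) :=
  MeasurableSet.univ_pi fun _ => measurableSet_Ioo

theorem volume_rect (a b : Fin n → ℝ) :
    volume (rect a b) = ∏ i, ENNReal.ofReal (b i - a i) :=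
  Real.volume_pi_Ioo

theorem volume_rect_ne_top (a b : Fin n → ℝ) : volume (rect a b) ≠ ⊤ := by
  rw [volume_rect]
  exact ENNReal.prod_ne_top fun _ _ => ENNReal.ofReal_ne_top

theorem volume_rect_ne_zero {a b : Fin n → ℝ} (hab : ∀ i, a i < b i) :
    volume (rect a b) ≠ 0 := by
  simp [volume_rect, Finset.prod_eq_zero_iff, hab]

theorem integrableOn_rect {w : (Fin n → ℝ) → ℝ} (hloc : LocallyIntegrable w volume)
    (a b : Fin n → ℝ) : IntegrableOn w (rect a b) volume :=
  (hloc.integrableOn_isCompact isCompact_Icc).mono_set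
    fun _ hy => ⟨fun i => (hy i trivial).1.le, fun i => (hy i trivial).2.le⟩

theorem div_le_MS_indicator {E : Set (Fin n → ℝ)} (hE : MeasurableSet E) {a b x : Fin n → ℝ}
    (hx : ∀ i, x i ∈ Ioo (a i) (b i)) :
    (volume (rect a b ∩ E)).toReal / (volume (rect a b)).toReal ≤ MS (E.indicator 1) x := by
  refine le_csSup ⟨1, ?_⟩ ⟨a, b, hx, by rw [setIntegral_abs_indicator_one E _ hE, inv_mul_eq_div]⟩
  rintro _ ⟨a', b', -, rfl⟩
  rw [setIntegral_abs_indicator_one E _ hE, inv_mul_eq_div]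
  exact div_le_one_of_le₀ (ENNReal.toReal_mono (volume_rect_ne_top a' b')
    (measure_mono inter_subset_left)) ENNReal.toReal_nonneg

theorem exists_rect_lt_of_lt_MSw {w f : (Fin n → ℝ) → ℝ} {x : Fin n → ℝ} {α : ℝ}
    (hx : α < MSw w f x) : ∃ a b : Fin n → ℝ, (∀ i, x i ∈ Ioo (a i) (b i)) ∧
      α < (∫ y in rect a b, w y)⁻¹ * ∫ y in rect a b, |f y| * w y := by
  obtain ⟨_, ⟨a, b, hxab, rfl⟩, hα⟩ := exists_lt_of_lt_csSup (by
    exact ⟨_, fun i => x i - 1, fun i => x i + 1, fun i => ⟨sub_one_lt _, lt_add_one _⟩, rfl⟩) hx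
  exact ⟨a, b, hxab, hα⟩

end Rectangles

theorem stmt13_general {n : ℕ} (w : (Fin n → ℝ) → ℝ)
    (hloc : LocallyIntegrable w volume) (K p₀ : ℝ) (hK : 1 ≤ K) (hp₀ : 1 ≤ p₀)
    (habs : ∀ a b : Fin n → ℝ, (∀ i, a i < b i) → ∀ A ⊆ rect a b, MeasurableSet A →
      ((volume A).toReal / (volume (rect a b)).toReal) ^ p₀ ≤
        K * ((∫ x in A, w x) / ∫ x in rect a b, w x)) :
    ∀ E : Set (Fin n → ℝ), MeasurableSet E → ∀ α : ℝ, 1 - 1 / K < α → α < 1 →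
      {x | α < MSw w (E.indicator 1) x} ⊆
        {x | 1 - K ^ (1 / p₀) * (1 - α) ^ (1 / p₀) < MS (E.indicator 1) x} := by
  intro E hE α _ hα x hx
  obtain ⟨a, b, hxab, hαR⟩ := exists_rect_lt_of_lt_MSw hx
  rw [setIntegral_abs_indicator_one_mul w E _ hE, inv_mul_eq_div] at hαR
  have hab : ∀ i, a i < b i := fun i => (hxab i).1.trans (hxab i).2
  have hR := measurableSet_rect a b
  -- the absorption inequality for `A = R` forbids `w(R) = 0`
  have hW : ∫ y in rect a b, w y ≠ 0 := fun h0 => by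
    have := habs a b hab _ subset_rfl hR
    rw [h0, div_self (ENNReal.toReal_ne_zero.2 ⟨volume_rect_ne_zero hab, volume_rect_ne_top a b⟩),
      Real.one_rpow] at this
    norm_num at this
  exact (one_sub_rpow_lt_measure_inter_div hE (volume_rect_ne_zero hab) (volume_rect_ne_top a b)
    (integrableOn_rect hloc a b) hW (by linarith) (by linarith) hα
    (habs a b hab _ sdiff_subset (hR.diff hE)) hαR).trans_le (div_le_MS_indicator hE hxab)

/-- transference of level sets from the weighted strong maximal operator
to the Lebesgue strong maximal operator under an absorption hypothesis on `w`. -/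
theorem stmt13 {n : ℕ} (w : (Fin n → ℝ) → ℝ) (hw : ∀ x, 0 ≤ w x) (hmeas : Measurable w)
    (hloc : LocallyIntegrable w volume) (K p₀ : ℝ) (hK : 1 ≤ K) (hp₀ : 1 ≤ p₀)
    (habs : ∀ a b : Fin n → ℝ, (∀ i, a i < b i) → ∀ A ⊆ rect a b, MeasurableSet A →
      ((volume A).toReal / (volume (rect a b)).toReal) ^ p₀ ≤
        K * ((∫ x in A, w x) / ∫ x in rect a b, w x)) :
    ∀ E : Set (Fin n → ℝ), MeasurableSet E → ∀ α : ℝ, 1 - 1 / K < α → α < 1 →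
      {x | α < MSw w (E.indicator 1) x} ⊆
        {x | 1 - K ^ (1 / p₀) * (1 - α) ^ (1 / p₀) < MS (E.indicator 1) x} :=
  stmt13_general w hloc K p₀ hK hp₀ habs
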